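/- arXiv:2101.07776 — 3 statements merged into one kernel-verified Lean document; each statement's English description precedes it below -/
import Mathlib

section
/- Let M₁, M₂ ∈ ℝ^{d×d} each have d distinct nonzero real eigenvalues, let Σ₁, Σ₂ ∈ ℝ^{d²×d²} be symmetric positive semidefinite, and let A₁, A₂ ∈ ℝ^{d×d} be arbitrary. Define P_i ∈ ℝ^{d²×d} with j-th column vec(M_i^j)/‖M_i^j‖_F for j = 1,…,d, and L(N₁, N₂) := −∑_{i=1}^{2} vec(A_i − N_i)ᵀ Σ_i⁺ vec(A_i − N_i). Define Â₁, Â₂ by vec(Â₁) = P₂ (P₂ᵀ Σ₁⁺ P₂)⁺ P₂ᵀ Σ₁⁺ vec(A₁) and vec(Â₂) = P₁ (P₁ᵀ Σ₂⁺ P₁)⁺ P₁ᵀ Σ₂⁺ vec(A₂). Then vec(Â₁) lies in the column space of P₂, vec(Â₂) lies in the column space of P₁, and for every pair (N₁, N₂) of d×d matrices with vec(N₁) in the column space of P₂ and vec(N₂) in the column space of P₁, one has L(N₁, N₂) ≤ L(Â₁, Â₂). -/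
open MeasureTheory ProbabilityTheory Filter Matrix
open scoped Topology Kronecker Classical

noncomputable section

/-- `vec` of a matrix: stacks the columns, so `vecM A (i, j) = A j i`. -/
def vecM {m n : Type*} (A : Matrix m n ℝ) : n × m → ℝ := fun p => A p.2 p.1

/-- The standard Gaussian measure (i.i.d. standard normal coordinates) on `ι → ℝ`. -/
def stdGaussian (ι : Type*) [Fintype ι] : Measure (ι → ℝ) :=
  Measure.pi fun _ => gaussianReal 0 1

/-- Centered multivariate Gaussian `N(0, S)`: the law of `S^{1/2} Z` where `Z` has i.i.d.
standard normal coordinates (junk value if `S` is not positive semidefinite). -/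
def gaussianOf {ι : Type*} [Fintype ι] [DecidableEq ι] (S : Matrix ι ι ℝ) :
    Measure (ι → ℝ) :=
  (stdGaussian ι).map fun z => (if h : S.PosSemidef then h.1.eigenvectorUnitary.1 *
    diagonal (fun i => Real.sqrt (h.1.eigenvalues i)) *
    (star h.1.eigenvectorUnitary.1 : Matrix ι ι ℝ) else 0) *ᵥ z

/-- Chi-squared distribution with `r` degrees of freedom: the law of the sum of squares of
`r` i.i.d. standard normals. -/
def chiSqMeasure (r : ℕ) : Measure ℝ :=
  (stdGaussian (Fin r)).map fun x => ∑ i, (x i) ^ 2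

/-- Convergence in distribution (weak convergence of the laws). -/
def TendstoInDistribution {Ω : Type*} [MeasurableSpace Ω] (μ : Measure Ω)
    {E : Type*} [TopologicalSpace E] [MeasurableSpace E] (X : ℕ → Ω → E)
    (ν : Measure E) : Prop :=
  ∀ f : BoundedContinuousFunction E ℝ,
    Tendsto (fun n => ∫ ω, f (X n ω) ∂μ) atTop (𝓝 (∫ x, f x ∂ν))

/-- Entrywise convergence in probability of random matrices. -/
def TendstoInProbMat {Ω : Type*} [MeasurableSpace Ω] (μ : Measure Ω) {m n : Type*}
    (X : ℕ → Ω → Matrix m n ℝ) (L : Matrix m n ℝ) : Prop :=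
  ∀ i j, TendstoInMeasure μ (fun k ω => X k ω i j) atTop (fun _ => L i j)

/-- Eigenvalues of a symmetric real matrix (junk value `0` otherwise). -/
def symEigs {ι : Type*} [Fintype ι] [DecidableEq ι] (A : Matrix ι ι ℝ) : ι → ℝ :=
  if h : A.IsHermitian then h.eigenvalues else 0

/-- `ε`-truncation `A(ε) = U diag(λ_i 1{λ_i > ε}) Uᵀ` of a symmetric matrix. -/
def truncMat {ι : Type*} [Fintype ι] [DecidableEq ι] (A : Matrix ι ι ℝ) (ε : ℝ) :
    Matrix ι ι ℝ :=
  if h : A.IsHermitian then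
    h.eigenvectorUnitary.1 *
      diagonal (fun i => if ε < h.eigenvalues i then h.eigenvalues i else 0) *
      (star h.eigenvectorUnitary.1 : Matrix ι ι ℝ)
  else 0

/-- Truncated Moore–Penrose pseudoinverse `A⁺(ε) = U diag(λ_i⁻¹ 1{λ_i > ε}) Uᵀ`
of a symmetric matrix. -/
def truncPinv {ι : Type*} [Fintype ι] [DecidableEq ι] (A : Matrix ι ι ℝ) (ε : ℝ) :
    Matrix ι ι ℝ :=
  if h : A.IsHermitian then
    h.eigenvectorUnitary.1 *
      diagonal (fun i => if ε < h.eigenvalues i then (h.eigenvalues i)⁻¹ else 0) *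
      (star h.eigenvectorUnitary.1 : Matrix ι ι ℝ)
  else 0

/-- Moore–Penrose pseudoinverse of a symmetric positive semidefinite matrix. -/
def pinv {ι : Type*} [Fintype ι] [DecidableEq ι] (A : Matrix ι ι ℝ) : Matrix ι ι ℝ :=
  truncPinv A 0

/-- Truncated rank `rank(A; ε)`: the number of eigenvalues (with multiplicity)
exceeding `ε`. -/
def truncRank {ι : Type*} [Fintype ι] [DecidableEq ι] (A : Matrix ι ι ℝ) (ε : ℝ) : ℕ :=
  Fintype.card {i // ε < symEigs A i}

/-- `ε` is an eigenvalue of `A`. -/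
def IsEigenvalue {ι : Type*} [Fintype ι] [DecidableEq ι] (A : Matrix ι ι ℝ) (ε : ℝ) :
    Prop :=
  ∃ v : ι → ℝ, v ≠ 0 ∧ A *ᵥ v = ε • v

/-- `M` has `d` pairwise distinct nonzero real eigenvalues: its characteristic polynomial
has `d` pairwise distinct real roots, all nonzero. -/
def HasDistinctNonzeroRealEigenvalues {d : ℕ} (M : Matrix (Fin d) (Fin d) ℝ) : Prop :=
  ∃ lam : Fin d → ℝ, Function.Injective lam ∧ (∀ i, lam i ≠ 0) ∧
    M.charpoly = ∏ i, (Polynomial.X - Polynomial.C (lam i))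

/-- Frobenius norm of a matrix. -/
def frobNorm {m n : Type*} [Fintype m] [Fintype n] (A : Matrix m n ℝ) : ℝ :=
  Real.sqrt (∑ i, ∑ j, (A i j) ^ 2)

/-- `Λ(X) = I_d ⊗ X − Xᵀ ⊗ I_d`. -/
def lamOp {d : ℕ} (X : Matrix (Fin d) (Fin d) ℝ) :
    Matrix (Fin d × Fin d) (Fin d × Fin d) ℝ :=
  (1 : Matrix (Fin d) (Fin d) ℝ) ⊗ₖ X - Xᵀ ⊗ₖ (1 : Matrix (Fin d) (Fin d) ℝ)

/-!
With `W = Σ⁺` (positive semidefinite for every `Σ`, as `pinv` inverts only the positive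
eigenvalues) the two summands of `L` decouple, and each is a weighted least-squares problem
`min_y q(a - P y)` for the quadratic form `q x = x ⬝ W x`. For `G = Pᵀ W P`, the matrix
`wlsProj W P = P G⁺ Pᵀ W` is the `W`-orthogonal projection onto the column space of `P`:
`ker G ⊆ ker (W P)` because `W` is positive semidefinite, hence `G G⁺ Pᵀ W = Pᵀ W`, i.e.
`Pᵀ W (a - wlsProj W P a) = 0`. Pythagoras for `q` then gives
`q(a - P y) = q(a - wlsProj W P a) + q(wlsProj W P a - P y)`.
-/

section PseudoInverse

variable {ι : Type*} [Fintype ι] [DecidableEq ι]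

lemma pinv_of_isHermitian {A : Matrix ι ι ℝ} (hA : A.IsHermitian) :
    pinv A = Unitary.conjStarAlgAut ℝ _ hA.eigenvectorUnitary
      (diagonal fun i => if 0 < hA.eigenvalues i then (hA.eigenvalues i)⁻¹ else 0) := by
  rw [pinv, truncPinv, dif_pos hA]
  rfl

lemma posSemidef_pinv (A : Matrix ι ι ℝ) : (pinv A).PosSemidef := by
  by_cases hA : A.IsHermitian
  · rw [pinv_of_isHermitian hA, Unitary.conjStarAlgAut_apply]
    refine PosSemidef.mul_mul_conjTranspose_same (posSemidef_diagonal_iff.mpr fun i => ?_) _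
    split_ifs <;> positivity
  · rw [pinv, truncPinv, dif_neg hA]
    exact PosSemidef.zero

omit [Fintype ι] [DecidableEq ι] in
lemma Matrix.PosSemidef.transpose_eq {A : Matrix ι ι ℝ} (hA : A.PosSemidef) : Aᵀ = A :=
  (isHermitian_iff_isSymm.mp hA.1).eq

lemma Matrix.PosSemidef.mul_pinv_mul_self {A : Matrix ι ι ℝ} (hA : A.PosSemidef) :
    A * pinv A * A = A := by
  set D : Matrix ι ι ℝ := diagonal (RCLike.ofReal ∘ hA.1.eigenvalues)
  have hspec : A = Unitary.conjStarAlgAut ℝ _ hA.1.eigenvectorUnitary D :=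
    hA.1.spectral_theorem
  have hDFD : D * diagonal (fun i => if 0 < hA.1.eigenvalues i then (hA.1.eigenvalues i)⁻¹
      else 0) * D = D := by
    simp only [D, diagonal_mul_diagonal, RCLike.ofReal_real_eq_id, Function.id_comp]
    congr 1
    funext i
    rcases (hA.eigenvalues_nonneg i).lt_or_eq with hpos | hzero
    · rw [if_pos hpos, mul_inv_cancel₀ hpos.ne', one_mul]
    · simp [← hzero]
  calc A * pinv A * A
      = Unitary.conjStarAlgAut ℝ _ hA.1.eigenvectorUnitary (D * diagonal
          (fun i => if 0 < hA.1.eigenvalues i then (hA.1.eigenvalues i)⁻¹ else 0) * D) := by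
        rw [map_mul, map_mul, ← hspec, pinv_of_isHermitian]
    _ = A := by rw [hDFD, ← hspec]

end PseudoInverse

section WeightedLeastSquares

variable {ι κ : Type*} [Fintype ι] [Fintype κ] [DecidableEq κ]
  {W : Matrix ι ι ℝ} (hW : W.PosSemidef) (P : Matrix ι κ ℝ)

def wlsProj (W : Matrix ι ι ℝ) (P : Matrix ι κ ℝ) : Matrix ι ι ℝ :=
  P * pinv (Pᵀ * W * P) * Pᵀ * W

omit [DecidableEq κ] in
include hW in
lemma posSemidef_gram : (Pᵀ * W * P).PosSemidef := by
  simpa only [conjTranspose_eq_transpose_of_trivial] using hW.conjTranspose_mul_mul_same P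

include hW in
lemma mul_mul_pinv_gram_mul_gram :
    W * P * (pinv (Pᵀ * W * P) * (Pᵀ * W * P)) = W * P := by
  set G := Pᵀ * W * P
  refine ext_iff_mulVec.mpr fun v => ?_
  set u := (pinv G * G) *ᵥ v - v
  have hGu : G *ᵥ u = 0 := by
    rw [mulVec_sub, mulVec_mulVec, ← Matrix.mul_assoc,
      (posSemidef_gram hW P).mul_pinv_mul_self, sub_self]
  have hWPu : W *ᵥ (P *ᵥ u) = 0 := by
    have hquad : (P *ᵥ u) ⬝ᵥ W *ᵥ (P *ᵥ u) = u ⬝ᵥ G *ᵥ u := by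
      rw [← mulVec_mulVec, ← mulVec_mulVec, dotProduct_mulVec u Pᵀ, vecMul_transpose]
    rw [← hW.dotProduct_mulVec_zero_iff, star_trivial, hquad, hGu, dotProduct_zero]
  have hdiff : (W * P * (pinv G * G)) *ᵥ v - (W * P) *ᵥ v = W *ᵥ (P *ᵥ u) := by
    simp only [u, mulVec_sub, mulVec_mulVec, Matrix.mul_assoc]
  rw [← sub_eq_zero, hdiff, hWPu]

include hW in
lemma gram_mul_pinv_gram_mul_transpose_mul :
    Pᵀ * W * P * pinv (Pᵀ * W * P) * (Pᵀ * W) = Pᵀ * W := by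
  simpa only [transpose_mul, transpose_transpose, hW.transpose_eq,
    (posSemidef_gram hW P).transpose_eq, (posSemidef_pinv _).transpose_eq, Matrix.mul_assoc]
    using congrArg transpose (mul_mul_pinv_gram_mul_gram hW P)

omit [Fintype κ] [DecidableEq κ] in
include hW in
lemma dotProduct_mulVec_le_add_of_orthogonal {u v : ι → ℝ} (horth : v ⬝ᵥ W *ᵥ u = 0) :
    u ⬝ᵥ W *ᵥ u ≤ (u + v) ⬝ᵥ W *ᵥ (u + v) := by
  have hsymm : u ⬝ᵥ W *ᵥ v = v ⬝ᵥ W *ᵥ u := by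
    rw [dotProduct_mulVec, ← mulVec_transpose, hW.transpose_eq, dotProduct_comm]
  have hv : 0 ≤ v ⬝ᵥ W *ᵥ v := by simpa only [star_trivial] using hW.dotProduct_mulVec_nonneg v
  have hexpand : (u + v) ⬝ᵥ W *ᵥ (u + v) =
      u ⬝ᵥ W *ᵥ u + u ⬝ᵥ W *ᵥ v + v ⬝ᵥ W *ᵥ u + v ⬝ᵥ W *ᵥ v := by
    simp only [mulVec_add, add_dotProduct, dotProduct_add]
    ring
  linarith

lemma wlsProj_mulVec (a : ι → ℝ) :
    wlsProj W P *ᵥ a = P *ᵥ ((pinv (Pᵀ * W * P) * Pᵀ * W) *ᵥ a) := by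
  simp only [wlsProj, mulVec_mulVec, Matrix.mul_assoc]

include hW in
lemma transpose_mul_mulVec_sub_wlsProj (a : ι → ℝ) :
    (Pᵀ * W) *ᵥ (a - wlsProj W P *ᵥ a) = 0 := by
  have hproj : Pᵀ * W * wlsProj W P = Pᵀ * W * P * pinv (Pᵀ * W * P) * (Pᵀ * W) := by
    simp only [wlsProj, Matrix.mul_assoc]
  rw [mulVec_sub, mulVec_mulVec, hproj, gram_mul_pinv_gram_mul_transpose_mul hW, sub_self]

include hW in
theorem dotProduct_mulVec_sub_wlsProj_le (a : ι → ℝ) (y : κ → ℝ) :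
    (a - wlsProj W P *ᵥ a) ⬝ᵥ W *ᵥ (a - wlsProj W P *ᵥ a) ≤
      (a - P *ᵥ y) ⬝ᵥ W *ᵥ (a - P *ᵥ y) := by
  set z := (pinv (Pᵀ * W * P) * Pᵀ * W) *ᵥ a - y
  have hdecomp : a - P *ᵥ y = (a - wlsProj W P *ᵥ a) + P *ᵥ z := by
    rw [wlsProj_mulVec, mulVec_sub]
    abel
  have horth : (P *ᵥ z) ⬝ᵥ W *ᵥ (a - wlsProj W P *ᵥ a) = 0 := by
    rw [← vecMul_transpose, ← dotProduct_mulVec, mulVec_mulVec,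
      transpose_mul_mulVec_sub_wlsProj hW, dotProduct_zero]
  rw [hdecomp]
  exact dotProduct_mulVec_le_add_of_orthogonal hW horth

end WeightedLeastSquares

lemma vecM_sub {m n : Type*} (X Y : Matrix m n ℝ) : vecM (X - Y) = vecM X - vecM Y := rfl

theorem llr_m_estimators_general {d : ℕ}
    (S₁ S₂ : Matrix (Fin d × Fin d) (Fin d × Fin d) ℝ)
    (A₁ A₂ : Matrix (Fin d) (Fin d) ℝ)
    (P₁ P₂ : Matrix (Fin d × Fin d) (Fin d) ℝ)
    (L : Matrix (Fin d) (Fin d) ℝ → Matrix (Fin d) (Fin d) ℝ → ℝ)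
    (hL : ∀ N₁ N₂, L N₁ N₂ =
      -((vecM (A₁ - N₁) ⬝ᵥ pinv S₁ *ᵥ vecM (A₁ - N₁)) +
        (vecM (A₂ - N₂) ⬝ᵥ pinv S₂ *ᵥ vecM (A₂ - N₂))))
    (Ahat₁ Ahat₂ : Matrix (Fin d) (Fin d) ℝ)
    (hAhat₁ : vecM Ahat₁ =
      (P₂ * pinv (P₂ᵀ * pinv S₁ * P₂) * P₂ᵀ * pinv S₁) *ᵥ vecM A₁)
    (hAhat₂ : vecM Ahat₂ =
      (P₁ * pinv (P₁ᵀ * pinv S₂ * P₁) * P₁ᵀ * pinv S₂) *ᵥ vecM A₂) :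
    (∃ x₁ : Fin d → ℝ, vecM Ahat₁ = P₂ *ᵥ x₁) ∧
    (∃ x₂ : Fin d → ℝ, vecM Ahat₂ = P₁ *ᵥ x₂) ∧
    ∀ N₁ N₂ : Matrix (Fin d) (Fin d) ℝ,
      (∃ y₁ : Fin d → ℝ, vecM N₁ = P₂ *ᵥ y₁) →
      (∃ y₂ : Fin d → ℝ, vecM N₂ = P₁ *ᵥ y₂) →
      L N₁ N₂ ≤ L Ahat₁ Ahat₂ := by
  refine ⟨⟨_, hAhat₁.trans (wlsProj_mulVec _ _)⟩, ⟨_, hAhat₂.trans (wlsProj_mulVec _ _)⟩, ?_⟩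
  rintro N₁ N₂ ⟨y₁, hy₁⟩ ⟨y₂, hy₂⟩
  have h₁ := dotProduct_mulVec_sub_wlsProj_le (posSemidef_pinv S₁) P₂ (vecM A₁) y₁
  have h₂ := dotProduct_mulVec_sub_wlsProj_le (posSemidef_pinv S₂) P₁ (vecM A₂) y₂
  rw [hL, hL, vecM_sub, vecM_sub, vecM_sub, vecM_sub, hy₁, hy₂, hAhat₁, hAhat₂]
  exact neg_le_neg (add_le_add h₁ h₂)

/-- Proposition 3.3: the explicit M-estimators `Â₁, Â₂` maximize the
log-likelihood type function `L` over the constraint sets given by the column spaces of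
`P₂` and `P₁`. -/
theorem llr_m_estimators {d : ℕ} (hd : 1 ≤ d)
    (M₁ M₂ : Matrix (Fin d) (Fin d) ℝ)
    (hM₁ : HasDistinctNonzeroRealEigenvalues M₁)
    (hM₂ : HasDistinctNonzeroRealEigenvalues M₂)
    (S₁ S₂ : Matrix (Fin d × Fin d) (Fin d × Fin d) ℝ)
    (hS₁ : S₁.PosSemidef) (hS₂ : S₂.PosSemidef)
    (A₁ A₂ : Matrix (Fin d) (Fin d) ℝ)
    (P₁ P₂ : Matrix (Fin d × Fin d) (Fin d) ℝ)
    (hP₁ : ∀ q j, P₁ q j = vecM (M₁ ^ ((j : ℕ) + 1)) q / frobNorm (M₁ ^ ((j : ℕ) + 1)))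
    (hP₂ : ∀ q j, P₂ q j = vecM (M₂ ^ ((j : ℕ) + 1)) q / frobNorm (M₂ ^ ((j : ℕ) + 1)))
    (L : Matrix (Fin d) (Fin d) ℝ → Matrix (Fin d) (Fin d) ℝ → ℝ)
    (hL : ∀ N₁ N₂, L N₁ N₂ =
      -((vecM (A₁ - N₁) ⬝ᵥ pinv S₁ *ᵥ vecM (A₁ - N₁)) +
        (vecM (A₂ - N₂) ⬝ᵥ pinv S₂ *ᵥ vecM (A₂ - N₂))))
    (Ahat₁ Ahat₂ : Matrix (Fin d) (Fin d) ℝ)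
    (hAhat₁ : vecM Ahat₁ =
      (P₂ * pinv (P₂ᵀ * pinv S₁ * P₂) * P₂ᵀ * pinv S₁) *ᵥ vecM A₁)
    (hAhat₂ : vecM Ahat₂ =
      (P₁ * pinv (P₁ᵀ * pinv S₂ * P₁) * P₁ᵀ * pinv S₂) *ᵥ vecM A₂) :
    (∃ x₁ : Fin d → ℝ, vecM Ahat₁ = P₂ *ᵥ x₁) ∧
    (∃ x₂ : Fin d → ℝ, vecM Ahat₂ = P₁ *ᵥ x₂) ∧
    ∀ N₁ N₂ : Matrix (Fin d) (Fin d) ℝ,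
      (∃ y₁ : Fin d → ℝ, vecM N₁ = P₂ *ᵥ y₁) →
      (∃ y₂ : Fin d → ℝ, vecM N₂ = P₁ *ᵥ y₂) →
      L N₁ N₂ ≤ L Ahat₁ Ahat₂ :=
  llr_m_estimators_general S₁ S₂ A₁ A₂ P₁ P₂ L hL Ahat₁ Ahat₂ hAhat₁ hAhat₂
end
end

section
/- Let M₁, M₂ ∈ ℝ^{d×d} each have d distinct nonzero real eigenvalues, and suppose Assumption (A1) holds with p = 2 (c(n)·vec(A_{i,n} − M_i) ⇒ N(0, Σ_i) with c(n) → ∞, A_{1,n} and A_{2,n} independent). Let ε > 0 be a constant that is not an eigenvalue of Σ₁ nor of Σ₂, and let P_i ∈ ℝ^{d²×d} have j-th column vec(M_i^j)/‖M_i^j‖_F. Define the residual vectors m₁ := vec(M₁) − P₂ (P₂ᵀ Σ₁⁺(ε) P₂)⁺ P₂ᵀ Σ₁⁺(ε) vec(M₁) and m₂ := vec(M₂) − P₁ (P₁ᵀ Σ₂⁺(ε) P₁)⁺ P₁ᵀ Σ₂⁺(ε) vec(M₂), and assume Σ₁⁺(ε) m₁ ≠ 0 and Σ₂⁺(ε)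 m₂ ≠ 0. Then the statistic Γ₂^#(ε) := c(n)² [ vec(A_{1,n})ᵀ Q_{1,2}[ε] vec(A_{1,n}) + vec(A_{2,n})ᵀ Q_{2,1}[ε] vec(A_{2,n}) ], with Q_{k,ℓ}[ε] := Σ_k⁺(ε) − Σ_k⁺(ε) P_ℓ (P_ℓᵀ Σ_k⁺(ε) P_ℓ)⁺ P_ℓᵀ Σ_k⁺(ε), tends to +∞ in probability as n → ∞; consequently, for any real random variable ξ with a chi-squared distribution, P(ξ > Γ₂^#(ε)) → 0. -/
/-! Write `T = Σ₁⁺(ε)` (positive semidefinite as `ε > 0`), `G = P₂ᵀ T P₂` and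
`B = P₂ G⁺ P₂ᵀ T`. From `G⁺ G G⁺ = G⁺` one gets `(1 - B)ᵀ T (1 - B) = T - T B = Q₁₂`, so the
population value `vec(M₁)ᵀ Q₁₂ vec(M₁) = m₁ᵀ T m₁` is positive exactly when `T m₁ ≠ 0`; the same
holds for the second sample.

Since `c(n) → ∞` while `c(n) (vec A_{i,n} - vec M_i)` converges in distribution, the estimators
are consistent: `vec A_{i,n} → vec M_i` in probability, because the limit law is tight and on
`{‖vec A_{i,n} - vec M_i‖ ≥ η}` the rescaled error leaves every fixed ball. By continuity the bracket in `Γ`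
converges in probability to a positive constant, and multiplying by `c(n)² → ∞` makes `Γ`
diverge. Any real random variable, in particular a chi-squared one, is bounded in probability,
so `P(ξ > Γ) → 0`. -/

open MeasureTheory ProbabilityTheory Filter Matrix
open scoped Topology Kronecker Classical

noncomputable section

section LinearAlgebra

lemma dotProduct_mulVec_mulVec_eq {m n R : Type*} [Fintype m] [Fintype n] [CommSemiring R]
    (M : Matrix m n R) (T : Matrix m m R) (v : n → R) :
    M *ᵥ v ⬝ᵥ T *ᵥ (M *ᵥ v) = v ⬝ᵥ (Mᵀ * T * M) *ᵥ v := by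
  rw [← mulVec_mulVec, ← mulVec_mulVec, dotProduct_transpose_mulVec, dotProduct_comm]

variable {ι κ : Type*} [Fintype ι] [DecidableEq ι] [Fintype κ] [DecidableEq κ]

lemma truncPinv_isHermitian (A : Matrix ι ι ℝ) (ε : ℝ) : (truncPinv A ε).IsHermitian := by
  unfold truncPinv
  split_ifs with h
  · simpa [star_eq_conjTranspose] using
      isHermitian_mul_mul_conjTranspose (h.eigenvectorUnitary.1 : Matrix ι ι ℝ)
        (isHermitian_diagonal _)
  · exact isHermitian_zero

lemma truncPinv_posSemidef (A : Matrix ι ι ℝ) {ε : ℝ} (hε : 0 ≤ ε) :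
    (truncPinv A ε).PosSemidef := by
  unfold truncPinv
  split_ifs with h
  · rw [star_eq_conjTranspose]
    refine PosSemidef.mul_mul_conjTranspose_same (posSemidef_diagonal_iff.mpr fun i => ?_) _
    split_ifs with hi
    · exact (inv_pos.mpr (hε.trans_lt hi)).le
    · exact le_rfl
  · exact PosSemidef.zero

lemma truncPinv_mul_self_mul_truncPinv {A : Matrix ι ι ℝ} (hA : A.IsHermitian) (ε : ℝ) :
    truncPinv A ε * A * truncPinv A ε = truncPinv A ε := by
  have hA' : A = hA.eigenvectorUnitary * diagonal hA.eigenvalues *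
      star (hA.eigenvectorUnitary : Matrix ι ι ℝ) := by
    simpa [Unitary.conjStarAlgAut_apply] using hA.spectral_theorem
  have hUU (X : Matrix ι ι ℝ) : star (hA.eigenvectorUnitary : Matrix ι ι ℝ) *
      (hA.eigenvectorUnitary * X) = X := by
    rw [← Matrix.mul_assoc, mem_unitaryGroup_iff'.mp hA.eigenvectorUnitary.2, Matrix.one_mul]
  unfold truncPinv
  rw [dif_pos hA]
  generalize (hA.eigenvectorUnitary : Matrix ι ι ℝ) = U at hA' hUU ⊢
  generalize hA.eigenvalues = lam at hA' ⊢
  set D : Matrix ι ι ℝ := diagonal fun i => if ε < lam i then (lam i)⁻¹ else 0 with hD_def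
  -- `0⁻¹ = 0` takes care of zero eigenvalues, so no condition on `ε` is needed.
  have hD (X : Matrix ι ι ℝ) : D * (diagonal lam * (D * X)) = D * X := by
    simp only [hD_def, ← Matrix.mul_assoc, diagonal_mul_diagonal]
    congr 2; funext i
    split_ifs
    · rcases eq_or_ne (lam i) 0 with h0 | h0
      · simp [h0]
      · field_simp
    · simp
  rw [hA']
  simp only [Matrix.mul_assoc, hUU, hD]

lemma residual_transpose_mul_mul_residual {T : Matrix ι ι ℝ} (hT : T.IsSymm)
    (P : Matrix ι κ ℝ) :
    (1 - P * pinv (Pᵀ * T * P) * Pᵀ * T)ᵀ * T * (1 - P * pinv (Pᵀ * T * P) * Pᵀ * T) =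
      T - T * P * pinv (Pᵀ * T * P) * Pᵀ * T := by
  have hG : (Pᵀ * T * P).IsHermitian := by
    simpa [hT.eq] using isHermitian_conjTranspose_mul_mul P (isHermitian_iff_isSymm.mpr hT)
  have hpinv : (pinv (Pᵀ * T * P))ᵀ = pinv (Pᵀ * T * P) :=
    (isHermitian_iff_isSymm.mp (truncPinv_isHermitian _ 0)).eq
  have hcancel (X : Matrix κ ι ℝ) :
      pinv (Pᵀ * T * P) * (Pᵀ * (T * (P * (pinv (Pᵀ * T * P) * X)))) =
        pinv (Pᵀ * T * P) * X := by
    simpa only [pinv, Matrix.mul_assoc] using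
      congrArg (· * X) (truncPinv_mul_self_mul_truncPinv hG 0)
  generalize pinv (Pᵀ * T * P) = Gp at hpinv hcancel ⊢
  simp only [transpose_sub, transpose_one, transpose_mul, transpose_transpose, hT.eq, hpinv,
    sub_mul, mul_sub, Matrix.one_mul, Matrix.mul_one, Matrix.mul_assoc, hcancel]
  abel

lemma residual_quadForm_pos {T : Matrix ι ι ℝ} (hT : T.PosSemidef) (P : Matrix ι κ ℝ)
    {v : ι → ℝ} (hv : T *ᵥ (v - (P * pinv (Pᵀ * T * P) * Pᵀ * T) *ᵥ v) ≠ 0) :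
    0 < v ⬝ᵥ (T - T * P * pinv (Pᵀ * T * P) * Pᵀ * T) *ᵥ v := by
  rw [← residual_transpose_mul_mul_residual (isHermitian_iff_isSymm.mp hT.isHermitian),
    ← dotProduct_mulVec_mulVec_eq, sub_mulVec, one_mulVec]
  refine (hT.dotProduct_mulVec_nonneg _).lt_of_ne' fun h => hv ?_
  exact (hT.dotProduct_mulVec_zero_iff _).mp (by rwa [star_trivial])

end LinearAlgebra

section Probability

variable {Ω ι : Type*} [MeasurableSpace Ω] {μ : Measure Ω} {l : Filter ι}

lemma tendsto_measure_lt_atTop [IsFiniteMeasure μ] {f : Ω → ℝ} (hf : AEMeasurable f μ) :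
    Tendsto (fun r : ℝ => μ {ω | r < f ω}) atTop (𝓝 0) := by
  have hempty : ⋂ r : ℝ, {ω | r < f ω} = ∅ :=
    Set.eq_empty_of_forall_notMem fun ω hω => lt_irrefl (f ω) (Set.mem_iInter.mp hω (f ω))
  simpa [Function.comp_def, hempty] using tendsto_measure_iInter_atTop
    (fun r => nullMeasurableSet_lt aemeasurable_const hf)
    (fun r r' hrr' ω (hω : r' < f ω) => hrr'.trans_lt hω) ⟨0, measure_ne_top μ _⟩

lemma tendsto_measure_lt_of_forall_tendsto_measure_le [IsFiniteMeasure μ] {Γ : ι → Ω → ℝ}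
    (hΓ : ∀ K, Tendsto (fun i => μ {ω | Γ i ω ≤ K}) l (𝓝 0)) {ξ : Ω → ℝ}
    (hξ : AEMeasurable ξ μ) : Tendsto (fun i => μ {ω | Γ i ω < ξ ω}) l (𝓝 0) := by
  rw [ENNReal.tendsto_nhds_zero]
  intro δ hδ
  have hδ2 := ENNReal.half_pos hδ.ne'
  obtain ⟨K, hK⟩ := (ENNReal.tendsto_nhds_zero.1 (tendsto_measure_lt_atTop hξ) _ hδ2).exists
  filter_upwards [ENNReal.tendsto_nhds_zero.1 (hΓ K) _ hδ2] with i hi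
  calc μ {ω | Γ i ω < ξ ω} ≤ μ ({ω | Γ i ω ≤ K} ∪ {ω | K < ξ ω}) :=
        measure_mono fun ω (hω : Γ i ω < ξ ω) => (le_or_gt (Γ i ω) K).imp id (·.trans hω)
    _ ≤ μ {ω | Γ i ω ≤ K} + μ {ω | K < ξ ω} := measure_union_le _ _
    _ ≤ δ / 2 + δ / 2 := add_le_add hi hK
    _ = δ := ENNReal.add_halves δ

lemma MeasureTheory.TendstoInMeasure.prodMk {E F : Type*} [PseudoMetricSpace E]
    [PseudoMetricSpace F] {f : ι → Ω → E} {g : ι → Ω → F} {f₀ : Ω → E} {g₀ : Ω → F}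
    (hf : TendstoInMeasure μ f l f₀) (hg : TendstoInMeasure μ g l g₀) :
    TendstoInMeasure μ (fun i ω => (f i ω, g i ω)) l (fun ω => (f₀ ω, g₀ ω)) := by
  rw [tendstoInMeasure_iff_dist] at *
  intro η hη
  refine tendsto_of_tendsto_of_tendsto_of_le_of_le tendsto_const_nhds
    (by simpa using (hf η hη).add (hg η hη)) (fun _ => zero_le) fun i => ?_
  refine (measure_mono fun ω hω => ?_).trans (measure_union_le _ _)
  simpa [Prod.dist_eq] using hω

lemma MeasureTheory.TendstoInMeasure.continuousAt_comp {E F : Type*} [PseudoMetricSpace E]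
    [PseudoMetricSpace F] {f : ι → Ω → E} {y : E} (h : TendstoInMeasure μ f l fun _ => y)
    {φ : E → F} (hφ : ContinuousAt φ y) :
    TendstoInMeasure μ (fun i ω => φ (f i ω)) l fun _ => φ y := by
  rw [tendstoInMeasure_iff_dist] at *
  intro η hη
  obtain ⟨δ, hδ, hφδ⟩ := Metric.continuousAt_iff.mp hφ η hη
  refine tendsto_of_tendsto_of_tendsto_of_le_of_le tendsto_const_nhds (h δ hδ)
    (fun _ => zero_le) fun i => measure_mono fun ω hω => ?_
  by_contra hlt
  exact (not_lt.mpr hω) (hφδ (not_le.mp hlt))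

lemma tendsto_measure_mul_le_of_tendstoInMeasure {a : ι → ℝ} (ha : Tendsto a l atTop)
    {Z : ι → Ω → ℝ} {z : ℝ} (hz : 0 < z) (hZ : TendstoInMeasure μ Z l fun _ => z) (K : ℝ) :
    Tendsto (fun i => μ {ω | a i * Z i ω ≤ K}) l (𝓝 0) := by
  rw [tendstoInMeasure_iff_dist] at hZ
  refine tendsto_of_tendsto_of_tendsto_of_le_of_le' tendsto_const_nhds (hZ (z / 2) (half_pos hz))
    (Eventually.of_forall fun _ => zero_le) ?_
  filter_upwards [ha.eventually_gt_atTop 0,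
    (ha.atTop_mul_const (half_pos hz)).eventually_gt_atTop K] with i hai hK
  refine measure_mono fun ω (hω : a i * Z i ω ≤ K) => ?_
  by_contra! hlt
  rw [Set.mem_ofPred_eq, not_le, Real.dist_eq] at hlt
  nlinarith [(abs_lt.mp hlt).1]

end Probability

section Consistency

variable {Ω E : Type*} [MeasurableSpace Ω] {μ : Measure Ω} [SeminormedAddCommGroup E]

def normCutoff (E : Type*) [SeminormedAddCommGroup E] (K : ℝ) :
    BoundedContinuousFunction E ℝ :=
  .mkOfBound ⟨fun x => min 1 (max 0 (‖x‖ - K)), by fun_prop⟩ 1 fun x y =>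
    Real.dist_eq _ _ ▸ abs_sub_le_of_nonneg_of_le (le_min zero_le_one (le_max_left _ _))
      (min_le_left _ _) (le_min zero_le_one (le_max_left _ _)) (min_le_left _ _)

lemma normCutoff_apply (K : ℝ) (x : E) : normCutoff E K x = min 1 (max 0 (‖x‖ - K)) := rfl

lemma normCutoff_nonneg (K : ℝ) (x : E) : 0 ≤ normCutoff E K x :=
  le_min zero_le_one (le_max_left _ _)

lemma normCutoff_le_one (K : ℝ) (x : E) : normCutoff E K x ≤ 1 :=
  min_le_left _ _

lemma normCutoff_le_indicator (K : ℝ) (x : E) :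
    normCutoff E K x ≤ {x : E | K < ‖x‖}.indicator 1 x := by
  by_cases hx : K < ‖x‖
  · simpa [hx] using normCutoff_le_one K x
  · simp [hx, normCutoff_apply, (not_lt.mp hx)]

lemma one_le_normCutoff {K : ℝ} {x : E} (hx : K + 1 ≤ ‖x‖) : 1 ≤ normCutoff E K x :=
  le_min le_rfl (by linarith [le_max_right 0 (‖x‖ - K)])

variable [MeasurableSpace E] [OpensMeasurableSpace E]

lemma integral_normCutoff_le (ν : Measure E) [IsFiniteMeasure ν] (K : ℝ) :
    ∫ x, normCutoff E K x ∂ν ≤ ν.real {x | K < ‖x‖} := by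
  have hS : MeasurableSet {x : E | K < ‖x‖} :=
    measurableSet_lt measurable_const continuous_norm.measurable
  rw [← integral_indicator_one hS]
  exact integral_mono ((normCutoff E K).integrable ν) ((integrable_const 1).indicator hS)
    (normCutoff_le_indicator K)

lemma tendsto_integral_normCutoff (ν : Measure E) [IsFiniteMeasure ν] :
    Tendsto (fun K => ∫ x, normCutoff E K x ∂ν) atTop (𝓝 0) := by
  refine squeeze_zero (fun K => integral_nonneg (normCutoff_nonneg K))
    (integral_normCutoff_le ν) ?_
  simpa [Function.comp_def, measureReal_def] using
    (ENNReal.tendsto_toReal ENNReal.zero_ne_top).comp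
      (tendsto_measure_lt_atTop continuous_norm.measurable.aemeasurable)

lemma measureReal_le_integral_normCutoff [IsFiniteMeasure μ] {Y : Ω → E}
    (hY : AEMeasurable Y μ) (K : ℝ) :
    μ.real {ω | K + 1 ≤ ‖Y ω‖} ≤ ∫ ω, normCutoff E K (Y ω) ∂μ := by
  have hint : Integrable (fun ω => normCutoff E K (Y ω)) μ :=
    .of_bound ((normCutoff E K).continuous.measurable.comp_aemeasurable hY).aestronglyMeasurable
      1 (ae_of_all _ fun ω => by
        rw [Real.norm_of_nonneg (normCutoff_nonneg K _)]; exact normCutoff_le_one K _)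
  calc μ.real {ω | K + 1 ≤ ‖Y ω‖} ≤ μ.real {ω | 1 ≤ normCutoff E K (Y ω)} :=
        measureReal_mono (fun ω => one_le_normCutoff) (measure_ne_top _ _)
    _ ≤ ∫ ω, normCutoff E K (Y ω) ∂μ := by
        simpa using mul_meas_ge_le_integral_of_nonneg
          (ae_of_all _ fun ω => normCutoff_nonneg K (Y ω)) hint 1

end Consistency

lemma tendstoInMeasure_of_tendstoInDistribution_smul_sub {Ω E : Type*} [MeasurableSpace Ω]
    {μ : Measure Ω} [IsFiniteMeasure μ] [SeminormedAddCommGroup E] [NormedSpace ℝ E]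
    [MeasurableSpace E] [BorelSpace E] {X : ℕ → Ω → E}
    (hX : ∀ n, AEMeasurable (X n) μ) {v : E} {c : ℕ → ℝ} (hc : Tendsto c atTop atTop)
    {ν : Measure E} [IsFiniteMeasure ν]
    (h : TendstoInDistribution μ (fun n ω => c n • (X n ω - v)) ν) :
    TendstoInMeasure μ X atTop fun _ => v := by
  rw [tendstoInMeasure_iff_measureReal_dist]
  intro η hη
  refine tendsto_order.2 ⟨fun a ha => .of_forall fun n => ha.trans_le measureReal_nonneg,
    fun δ hδ => ?_⟩
  obtain ⟨K, hKδ, hK⟩ := (((tendsto_integral_normCutoff ν).eventually (gt_mem_nhds hδ)).and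
    (eventually_ge_atTop 0)).exists
  filter_upwards [(h (normCutoff E K)).eventually (gt_mem_nhds hKδ),
    hc.eventually_ge_atTop ((K + 1) / η)] with n hn hcn
  have hcpos : 0 < c n := (by positivity : 0 < (K + 1) / η).trans_le hcn
  calc μ.real {ω | η ≤ dist (X n ω) v} ≤ μ.real {ω | K + 1 ≤ ‖c n • (X n ω - v)‖} := by
        refine measureReal_mono (fun ω (hω : η ≤ dist (X n ω) v) => ?_) (measure_ne_top _ _)
        rw [Set.mem_ofPred_eq, norm_smul, Real.norm_of_nonneg hcpos.le, ← dist_eq_norm]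
        calc K + 1 = (K + 1) / η * η := by field_simp
          _ ≤ c n * dist (X n ω) v := mul_le_mul hcn hω hη.le hcpos.le
    _ ≤ ∫ ω, normCutoff E K (c n • (X n ω - v)) ∂μ :=
        measureReal_le_integral_normCutoff (((continuous_const_smul (c n)).comp
          (continuous_sub_right v)).measurable.comp_aemeasurable (hX n)) K
    _ < δ := hn

instance {ι : Type*} [Fintype ι] [DecidableEq ι] (S : Matrix ι ι ℝ) :
    IsFiniteMeasure (gaussianOf S) := by
  unfold gaussianOf _root_.stdGaussian; infer_instance

theorem llr_statistic_diverges_under_alternative_general {d : ℕ}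
    (M₁ M₂ : Matrix (Fin d) (Fin d) ℝ)
    {Ω : Type*} [MeasurableSpace Ω] (μ : Measure Ω) [IsProbabilityMeasure μ]
    (A₁ A₂ : ℕ → Ω → Matrix (Fin d) (Fin d) ℝ)
    (hmeas₁ : ∀ n, Measurable fun ω => vecM (A₁ n ω))
    (hmeas₂ : ∀ n, Measurable fun ω => vecM (A₂ n ω))
    (c : ℕ → ℝ) (hc : Tendsto c atTop atTop)
    (S₁ S₂ : Matrix (Fin d × Fin d) (Fin d × Fin d) ℝ)
    (hCLT₁ : TendstoInDistribution μ
      (fun n ω => c n • (vecM (A₁ n ω) - vecM M₁)) (gaussianOf S₁))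
    (hCLT₂ : TendstoInDistribution μ
      (fun n ω => c n • (vecM (A₂ n ω) - vecM M₂)) (gaussianOf S₂))
    (ε : ℝ) (hε : 0 < ε)
    (P₁ P₂ : Matrix (Fin d × Fin d) (Fin d) ℝ)
    (m₁ m₂ : Fin d × Fin d → ℝ)
    (hm₁ : m₁ = vecM M₁ -
      (P₂ * pinv (P₂ᵀ * truncPinv S₁ ε * P₂) * P₂ᵀ * truncPinv S₁ ε) *ᵥ vecM M₁)
    (hm₂ : m₂ = vecM M₂ -
      (P₁ * pinv (P₁ᵀ * truncPinv S₂ ε * P₁) * P₁ᵀ * truncPinv S₂ ε) *ᵥ vecM M₂)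
    (hm₁ne : truncPinv S₁ ε *ᵥ m₁ ≠ 0) (hm₂ne : truncPinv S₂ ε *ᵥ m₂ ≠ 0)
    (Q₁₂ Q₂₁ : Matrix (Fin d × Fin d) (Fin d × Fin d) ℝ)
    (hQ₁₂ : Q₁₂ = truncPinv S₁ ε -
      truncPinv S₁ ε * P₂ * pinv (P₂ᵀ * truncPinv S₁ ε * P₂) * P₂ᵀ * truncPinv S₁ ε)
    (hQ₂₁ : Q₂₁ = truncPinv S₂ ε -
      truncPinv S₂ ε * P₁ * pinv (P₁ᵀ * truncPinv S₂ ε * P₁) * P₁ᵀ * truncPinv S₂ ε)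
    (Γ : ℕ → Ω → ℝ)
    (hΓ : ∀ n ω, Γ n ω = (c n) ^ 2 *
      ((vecM (A₁ n ω) ⬝ᵥ Q₁₂ *ᵥ vecM (A₁ n ω)) +
        (vecM (A₂ n ω) ⬝ᵥ Q₂₁ *ᵥ vecM (A₂ n ω)))) :
    (∀ K : ℝ, Tendsto (fun n => μ {ω | Γ n ω ≤ K}) atTop (𝓝 0)) ∧
    ∀ (r : ℕ) (ξ : Ω → ℝ), Measurable ξ → Measure.map ξ μ = chiSqMeasure r →
      Tendsto (fun n => μ {ω | Γ n ω < ξ ω}) atTop (𝓝 0) := by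
  subst hm₁ hm₂
  have hq₁ : 0 < vecM M₁ ⬝ᵥ Q₁₂ *ᵥ vecM M₁ :=
    hQ₁₂ ▸ residual_quadForm_pos (truncPinv_posSemidef S₁ hε.le) P₂ hm₁ne
  have hq₂ : 0 < vecM M₂ ⬝ᵥ Q₂₁ *ᵥ vecM M₂ :=
    hQ₂₁ ▸ residual_quadForm_pos (truncPinv_posSemidef S₂ hε.le) P₁ hm₂ne
  have hconsistent := (tendstoInMeasure_of_tendstoInDistribution_smul_sub
    (fun n => (hmeas₁ n).aemeasurable) hc hCLT₁).prodMk
    (tendstoInMeasure_of_tendstoInDistribution_smul_sub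
      (fun n => (hmeas₂ n).aemeasurable) hc hCLT₂)
  have hquad := hconsistent.continuousAt_comp
    (φ := fun x => x.1 ⬝ᵥ Q₁₂ *ᵥ x.1 + x.2 ⬝ᵥ Q₂₁ *ᵥ x.2)
    ((continuous_fst.dotProduct (continuous_const.matrix_mulVec continuous_fst)).add
      (continuous_snd.dotProduct (continuous_const.matrix_mulVec continuous_snd))).continuousAt
  have hdiverges : ∀ K : ℝ, Tendsto (fun n => μ {ω | Γ n ω ≤ K}) atTop (𝓝 0) := by
    simpa only [hΓ, Function.comp_apply] using tendsto_measure_mul_le_of_tendstoInMeasure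
      ((tendsto_pow_atTop two_ne_zero).comp hc) (add_pos hq₁ hq₂) hquad
  exact ⟨hdiverges, fun r ξ hξ _ =>
    tendsto_measure_lt_of_forall_tendsto_measure_le hdiverges hξ.aemeasurable⟩

/-- Proposition 3.6: under the alternative, the statistic `Γ₂^#(ε)`
diverges to `+∞` in probability, so the p-value of any chi-squared reference variable
tends to `0`. -/
theorem llr_statistic_diverges_under_alternative {d : ℕ} (hd : 1 ≤ d)
    (M₁ M₂ : Matrix (Fin d) (Fin d) ℝ)
    (hM₁ : HasDistinctNonzeroRealEigenvalues M₁)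
    (hM₂ : HasDistinctNonzeroRealEigenvalues M₂)
    {Ω : Type*} [MeasurableSpace Ω] (μ : Measure Ω) [IsProbabilityMeasure μ]
    (A₁ A₂ : ℕ → Ω → Matrix (Fin d) (Fin d) ℝ)
    (hmeas₁ : ∀ n, Measurable fun ω => vecM (A₁ n ω))
    (hmeas₂ : ∀ n, Measurable fun ω => vecM (A₂ n ω))
    (hindep : ∀ n, IndepFun (fun ω => vecM (A₁ n ω)) (fun ω => vecM (A₂ n ω)) μ)
    (c : ℕ → ℝ) (hc : Tendsto c atTop atTop)
    (S₁ S₂ : Matrix (Fin d × Fin d) (Fin d × Fin d) ℝ)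
    (hS₁ : S₁.PosSemidef) (hS₂ : S₂.PosSemidef)
    (hCLT₁ : TendstoInDistribution μ
      (fun n ω => c n • (vecM (A₁ n ω) - vecM M₁)) (gaussianOf S₁))
    (hCLT₂ : TendstoInDistribution μ
      (fun n ω => c n • (vecM (A₂ n ω) - vecM M₂)) (gaussianOf S₂))
    (ε : ℝ) (hε : 0 < ε)
    (hεeig₁ : ¬ IsEigenvalue S₁ ε) (hεeig₂ : ¬ IsEigenvalue S₂ ε)
    (P₁ P₂ : Matrix (Fin d × Fin d) (Fin d) ℝ)
    (hP₁ : ∀ q j, P₁ q j = vecM (M₁ ^ ((j : ℕ) + 1)) q / frobNorm (M₁ ^ ((j : ℕ) + 1)))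
    (hP₂ : ∀ q j, P₂ q j = vecM (M₂ ^ ((j : ℕ) + 1)) q / frobNorm (M₂ ^ ((j : ℕ) + 1)))
    (m₁ m₂ : Fin d × Fin d → ℝ)
    (hm₁ : m₁ = vecM M₁ -
      (P₂ * pinv (P₂ᵀ * truncPinv S₁ ε * P₂) * P₂ᵀ * truncPinv S₁ ε) *ᵥ vecM M₁)
    (hm₂ : m₂ = vecM M₂ -
      (P₁ * pinv (P₁ᵀ * truncPinv S₂ ε * P₁) * P₁ᵀ * truncPinv S₂ ε) *ᵥ vecM M₂)
    (hm₁ne : truncPinv S₁ ε *ᵥ m₁ ≠ 0) (hm₂ne : truncPinv S₂ ε *ᵥ m₂ ≠ 0)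
    (Q₁₂ Q₂₁ : Matrix (Fin d × Fin d) (Fin d × Fin d) ℝ)
    (hQ₁₂ : Q₁₂ = truncPinv S₁ ε -
      truncPinv S₁ ε * P₂ * pinv (P₂ᵀ * truncPinv S₁ ε * P₂) * P₂ᵀ * truncPinv S₁ ε)
    (hQ₂₁ : Q₂₁ = truncPinv S₂ ε -
      truncPinv S₂ ε * P₁ * pinv (P₁ᵀ * truncPinv S₂ ε * P₁) * P₁ᵀ * truncPinv S₂ ε)
    (Γ : ℕ → Ω → ℝ)
    (hΓ : ∀ n ω, Γ n ω = (c n) ^ 2 *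
      ((vecM (A₁ n ω) ⬝ᵥ Q₁₂ *ᵥ vecM (A₁ n ω)) +
        (vecM (A₂ n ω) ⬝ᵥ Q₂₁ *ᵥ vecM (A₂ n ω)))) :
    (∀ K : ℝ, Tendsto (fun n => μ {ω | Γ n ω ≤ K}) atTop (𝓝 0)) ∧
    ∀ (r : ℕ) (ξ : Ω → ℝ), Measurable ξ → Measure.map ξ μ = chiSqMeasure r →
      Tendsto (fun n => μ {ω | Γ n ω < ξ ω}) atTop (𝓝 0) :=
  llr_statistic_diverges_under_alternative_general M₁ M₂ μ A₁ A₂ hmeas₁ hmeas₂ c hc S₁ S₂ hCLT₁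
    hCLT₂ ε hε P₁ P₂ m₁ m₂ hm₁ hm₂ hm₁ne hm₂ne Q₁₂ Q₂₁ hQ₁₂ hQ₂₁ Γ hΓ

end
end

section
/- Let M₁, M₂ ∈ ℝ^{d×d} each have d distinct nonzero real eigenvalues, and suppose they share a common eigenvector matrix: there is an invertible V ∈ ℝ^{d×d} such that V⁻¹M₁V and V⁻¹M₂V are both diagonal. Then every matrix power M_i^j (j = 1,…,d; i = 1,2) is nonzero, and, with P_i ∈ ℝ^{d²×d} defined to have j-th column vec(M_i^j)/‖M_i^j‖_F, there exist vectors x₁, x₂ ∈ ℝ^d such that vec(M₁) = P₂ x₁ and vec(M₂) = P₁ x₂. -/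
open MeasureTheory ProbabilityTheory Filter Matrix
open scoped Topology Kronecker Classical

noncomputable section

/-! For `{M, N} = {M₁, M₂}`, conjugating by `V` turns `M` and `N` into diagonal matrices
`diag μ` and `diag ν`, where the eigenvalues `μ` of `M` are distinct and nonzero. Then
`(μ i ^ (j + 1))ᵢⱼ = diag μ * vandermonde μ` is invertible, so the system
`ν i = ∑ j, c j * μ i ^ (j + 1)` has a solution `c`, that is
`diag ν = ∑ j, c j • (diag μ) ^ (j + 1)`. Conjugating back writes `N` as the same combination of
the powers of `M`, and rescaling `c j` by `‖M ^ (j + 1)‖_F` puts `vec N` in the column space of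
`P`. The powers of `M` do not vanish since `det M`, the product of its eigenvalues, does not. -/

open Finset Polynomial

theorem HasDistinctNonzeroRealEigenvalues.inv_mul_mul {d : ℕ} {M : Matrix (Fin d) (Fin d) ℝ}
    (hM : HasDistinctNonzeroRealEigenvalues M) {V : Matrix (Fin d) (Fin d) ℝ}
    (hV : IsUnit V.det) : HasDistinctNonzeroRealEigenvalues (V⁻¹ * M * V) := by
  rwa [HasDistinctNonzeroRealEigenvalues, charpoly_mul_comm, ← Matrix.mul_assoc,
    mul_nonsing_inv V hV, Matrix.one_mul]

theorem HasDistinctNonzeroRealEigenvalues.injective_and_ne_zero_of_diagonal {d : ℕ} {μ : Fin d → ℝ}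
    (h : HasDistinctNonzeroRealEigenvalues (diagonal μ)) :
    Function.Injective μ ∧ ∀ i, μ i ≠ 0 := by
  obtain ⟨lam, hinj, hne, hcp⟩ := h
  have roots_eq (f : Fin d → ℝ) : (∏ i, (X - C (f i))).roots = univ.val.map f := by
    simpa [Multiset.map_map, Function.comp_def, prod_eq_multiset_prod] using
      roots_multiset_prod_X_sub_C (univ.val.map f)
  have hroots : univ.val.map μ = univ.val.map lam := by
    rw [← roots_eq, ← roots_eq, ← charpoly_diagonal, hcp]
  refine ⟨fun a b hab => ?_, fun i => ?_⟩
  · have hnd : (univ.val.map μ).Nodup := hroots ▸ univ.nodup.map hinj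
    exact Multiset.inj_on_of_nodup_map hnd a (mem_univ_val a) b (mem_univ_val b) hab
  · obtain ⟨k, -, hk⟩ :=
      Multiset.mem_map.mp (hroots ▸ Multiset.mem_map_of_mem μ (mem_univ_val i))
    exact hk ▸ hne k

theorem exists_diagonal_eq_sum_smul_pow_succ {K : Type*} [Field K] {d : ℕ} {μ : Fin d → K}
    (hinj : Function.Injective μ) (hne : ∀ i, μ i ≠ 0) (ν : Fin d → K) :
    ∃ c : Fin d → K, diagonal ν = ∑ j, c j • diagonal μ ^ ((j : ℕ) + 1) := by
  have hunit : IsUnit (diagonal μ * vandermonde μ) := by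
    rw [isUnit_iff_isUnit_det, det_mul, det_diagonal, isUnit_iff_ne_zero]
    exact mul_ne_zero (prod_ne_zero_iff.mpr fun i _ => hne i)
      (det_vandermonde_ne_zero_iff.mpr hinj)
  obtain ⟨c, hc⟩ := mulVec_surjective_iff_isUnit.mpr hunit ν
  have hν (i : Fin d) : ∑ j, c j * μ i ^ ((j : ℕ) + 1) = ν i := by
    rw [← hc]
    simp [mulVec, dotProduct, diagonal_mul, vandermonde_apply, pow_succ', mul_comm]
  refine ⟨c, ?_⟩
  ext i k
  rcases eq_or_ne i k with rfl | hik
  · simp [Matrix.sum_apply, diagonal_pow, ← hν i]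
  · simp [Matrix.sum_apply, diagonal_pow, diagonal_apply_ne _ hik]

theorem Units.eq_sum_smul_pow_of_conj {R A ι : Type*} [CommSemiring R] [Semiring A]
    [Algebra R A] [Fintype ι] (u : Aˣ) {x y : A} (c : ι → R) (k : ι → ℕ)
    (h : ↑u⁻¹ * y * u = ∑ i, c i • (↑u⁻¹ * x * u) ^ k i) : y = ∑ i, c i • x ^ k i := by
  rw [← (Units.mul_left_inj u).trans (Units.mul_right_inj u⁻¹), h, mul_sum, sum_mul]
  simp only [Units.conj_pow', mul_smul_comm, smul_mul_assoc]

theorem HasDistinctNonzeroRealEigenvalues.exists_eq_sum_smul_pow_succ {d : ℕ}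
    {M N V : Matrix (Fin d) (Fin d) ℝ} (hM : HasDistinctNonzeroRealEigenvalues M)
    (hV : IsUnit V.det) (hdM : (V⁻¹ * M * V).IsDiag) (hdN : (V⁻¹ * N * V).IsDiag) :
    ∃ c : Fin d → ℝ, N = ∑ j, c j • M ^ ((j : ℕ) + 1) := by
  obtain ⟨hinj, hne⟩ := (hdM.diagonal_diag ▸ hM.inv_mul_mul hV).injective_and_ne_zero_of_diagonal
  obtain ⟨c, hc⟩ := exists_diagonal_eq_sum_smul_pow_succ hinj hne (V⁻¹ * N * V).diag
  refine ⟨c, (nonsingInvUnit V hV).eq_sum_smul_pow_of_conj c (fun j => (j : ℕ) + 1) ?_⟩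
  change V⁻¹ * N * V = ∑ j, c j • (V⁻¹ * M * V) ^ ((j : ℕ) + 1)
  rwa [← hdN.diagonal_diag, ← hdM.diagonal_diag]

theorem HasDistinctNonzeroRealEigenvalues.pow_ne_zero {d : ℕ} [NeZero d]
    {M : Matrix (Fin d) (Fin d) ℝ} (hM : HasDistinctNonzeroRealEigenvalues M) (k : ℕ) :
    M ^ k ≠ 0 := by
  obtain ⟨lam, -, hne, hcp⟩ := hM
  have hdet : M.det ≠ 0 := by
    rw [det_eq_sign_charpoly_coeff, hcp, coeff_zero_eq_eval_zero, eval_prod]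
    simp [prod_eq_zero_iff, hne]
  exact ((isUnit_iff_isUnit_det M).mpr hdet.isUnit).pow k |>.ne_zero

theorem frobNorm_ne_zero {m n : Type*} [Fintype m] [Fintype n] {A : Matrix m n ℝ}
    (hA : A ≠ 0) : frobNorm A ≠ 0 := by
  contrapose! hA
  rw [frobNorm, Real.sqrt_eq_zero (by positivity)] at hA
  ext i j
  have hrow := (sum_eq_zero_iff_of_nonneg fun i _ => by positivity).mp hA i (mem_univ i)
  simpa using (sum_eq_zero_iff_of_nonneg fun j _ => by positivity).mp hrow j (mem_univ j)

theorem exists_vecM_eq_mulVec_of_eq_sum_smul {m n ι : Type*} [Fintype m] [Fintype n]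
    [Fintype ι] {A : ι → Matrix m n ℝ} (hA : ∀ i, A i ≠ 0) {N : Matrix m n ℝ} {c : ι → ℝ}
    (hN : N = ∑ i, c i • A i) {P : Matrix (n × m) ι ℝ}
    (hP : ∀ q i, P q i = vecM (A i) q / frobNorm (A i)) :
    ∃ x : ι → ℝ, vecM N = P *ᵥ x := by
  refine ⟨fun i => frobNorm (A i) * c i, funext fun q => ?_⟩
  simp only [hN, vecM, mulVec, dotProduct, hP, Matrix.sum_apply, Matrix.smul_apply, smul_eq_mul]
  refine sum_congr rfl fun i _ => ?_
  field_simp [frobNorm_ne_zero (hA i)]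

theorem vec_in_column_space_under_H0_general {d : ℕ}
    (M₁ M₂ : Matrix (Fin d) (Fin d) ℝ)
    (hM₁ : HasDistinctNonzeroRealEigenvalues M₁)
    (hM₂ : HasDistinctNonzeroRealEigenvalues M₂)
    (V : Matrix (Fin d) (Fin d) ℝ) (hV : IsUnit V.det)
    (hdiag₁ : (V⁻¹ * M₁ * V).IsDiag) (hdiag₂ : (V⁻¹ * M₂ * V).IsDiag)
    (P₁ P₂ : Matrix (Fin d × Fin d) (Fin d) ℝ)
    (hP₁ : ∀ q j, P₁ q j = vecM (M₁ ^ ((j : ℕ) + 1)) q / frobNorm (M₁ ^ ((j : ℕ) + 1)))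
    (hP₂ : ∀ q j, P₂ q j = vecM (M₂ ^ ((j : ℕ) + 1)) q / frobNorm (M₂ ^ ((j : ℕ) + 1))) :
    (∀ j : Fin d, M₁ ^ ((j : ℕ) + 1) ≠ 0) ∧
    (∀ j : Fin d, M₂ ^ ((j : ℕ) + 1) ≠ 0) ∧
    (∃ x₁ : Fin d → ℝ, vecM M₁ = P₂ *ᵥ x₁) ∧
    (∃ x₂ : Fin d → ℝ, vecM M₂ = P₁ *ᵥ x₂) := by
  have hpow₁ (j : Fin d) : M₁ ^ ((j : ℕ) + 1) ≠ 0 :=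
    haveI := NeZero.of_pos j.pos
    hM₁.pow_ne_zero _
  have hpow₂ (j : Fin d) : M₂ ^ ((j : ℕ) + 1) ≠ 0 :=
    haveI := NeZero.of_pos j.pos
    hM₂.pow_ne_zero _
  obtain ⟨c₁, hc₁⟩ := hM₂.exists_eq_sum_smul_pow_succ hV hdiag₂ hdiag₁
  obtain ⟨c₂, hc₂⟩ := hM₁.exists_eq_sum_smul_pow_succ hV hdiag₁ hdiag₂
  exact ⟨hpow₁, hpow₂, exists_vecM_eq_mulVec_of_eq_sum_smul hpow₂ hc₁ hP₂,
    exists_vecM_eq_mulVec_of_eq_sum_smul hpow₁ hc₂ hP₁⟩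

/-- Equation (A.2): under `H₀`, `vec M₁` lies in the column space of
`P₂` and `vec M₂` lies in the column space of `P₁`; also all powers `M_i^j` are nonzero. -/
theorem vec_in_column_space_under_H0 {d : ℕ} (hd : 1 ≤ d)
    (M₁ M₂ : Matrix (Fin d) (Fin d) ℝ)
    (hM₁ : HasDistinctNonzeroRealEigenvalues M₁)
    (hM₂ : HasDistinctNonzeroRealEigenvalues M₂)
    (V : Matrix (Fin d) (Fin d) ℝ) (hV : IsUnit V.det)
    (hdiag₁ : (V⁻¹ * M₁ * V).IsDiag) (hdiag₂ : (V⁻¹ * M₂ * V).IsDiag)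
    (P₁ P₂ : Matrix (Fin d × Fin d) (Fin d) ℝ)
    (hP₁ : ∀ q j, P₁ q j = vecM (M₁ ^ ((j : ℕ) + 1)) q / frobNorm (M₁ ^ ((j : ℕ) + 1)))
    (hP₂ : ∀ q j, P₂ q j = vecM (M₂ ^ ((j : ℕ) + 1)) q / frobNorm (M₂ ^ ((j : ℕ) + 1))) :
    (∀ j : Fin d, M₁ ^ ((j : ℕ) + 1) ≠ 0) ∧
    (∀ j : Fin d, M₂ ^ ((j : ℕ) + 1) ≠ 0) ∧
    (∃ x₁ : Fin d → ℝ, vecM M₁ = P₂ *ᵥ x₁) ∧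
    (∃ x₂ : Fin d → ℝ, vecM M₂ = P₁ *ᵥ x₂) :=
  vec_in_column_space_under_H0_general M₁ M₂ hM₁ hM₂ V hV hdiag₁ hdiag₂ P₁ P₂ hP₁ hP₂

end
end
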